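/- Let D be a strongly connected tournament on a finite vertex type V with |V| = n, let k ≥ 2, and suppose there is an ordering σ : Fin n ≃ V whose feedback arc set S = S(σ) is minimum (|S(σ)| ≤ |S(τ)| for every ordering τ) and such that the subdigraph D_S arc-induced by S is a directed path. If |S| = m, then D is k-Always Winnable if and only if gcd(k, F_{m+2}) = 1, where F denotes the Fibonacci sequence with F_0 = 0, F_1 = 1. -/

import Mathlib

open scoped Classical

/-- A digraph (given by its domination relation `adj`) is `k`-Always Winnable if every labeling
of the vertices by `ZMod k` can be toggled to the zero labeling: `x v` records the number of
times vertex `v` is toggled. -/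
def kAW {V : Type*} [Fintype V] (adj : V → V → Prop) (k : ℕ) : Prop :=
  ∀ lam : V → ZMod k, ∃ x : V → ZMod k, ∀ v : V,
    lam v + x v + ∑ u ∈ Finset.univ.filter (fun u => adj u v), x u = 0

/-- The feedback arc set of the digraph `adj` with respect to the vertex ordering `σ`:
all arcs `(σ j, σ i)` with `σ j → σ i` and `i < j`. -/
noncomputable def feedbackArcSet {V : Type*} [Fintype V] (adj : V → V → Prop)
    {n : ℕ} (σ : Fin n ≃ V) : Finset (V × V) :=
  Finset.univ.filter fun p : V × V => adj p.1 p.2 ∧ σ.symm p.2 < σ.symm p.1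

/-!
List the vertices by `σ`. In a tournament every vertex is dominated by the vertices before it,
except where a feedback arc reverses the relation, so in terms of the prefix sums `P i` of a toggle
vector `x` the lights-out row at position `i` is `P i` plus the values of `x` at the tails of the
feedback arcs into `i`, minus its values at the heads of the feedback arcs out of `i`.

Swapping two consecutive vertices joined by a feedback arc would remove that arc, so in a minimum
feedback arc set the path `u₀ → u₁ → ⋯ → u_{p-1}` visits positions pairwise at least two apart.
For `x` in the kernel, the prefix sums then vanish off the path, `x uₜ = P (σ⁻¹ uₜ)`, and the rows
at the path read `x u_{t+1} = x uₜ + x u_{t-1}` with a last row forcing `F_{p+1} x u₀ = 0`.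
Conversely every `c` with `F_{p+1} c = 0` gives a kernel vector with `x u₀ = c`. So the
lights-out operator on `V → ZMod k` is injective, equivalently surjective, iff
`F_{p+1} = F_{m+2}` is a non-zero-divisor, i.e. a unit, of `ZMod k`.
-/

open Finset

section LightsOut

variable {V : Type*} [Fintype V]

noncomputable def lightsOut (adj : V → V → Prop) (R : Type*) [AddCommGroup R] :
    (V → R) →+ (V → R) where
  toFun x v := x v + ∑ u ∈ univ.filter (fun u => adj u v), x u
  map_zero' := by ext; simp
  map_add' x y := by
    ext v
    simp only [Pi.add_apply, sum_add_distrib]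
    abel

theorem kAW_iff_lightsOut_eq_zero (adj : V → V → Prop) (k : ℕ) [NeZero k] :
    kAW adj k ↔ ∀ x : V → ZMod k, lightsOut adj (ZMod k) x = 0 → x = 0 := by
  have hsurj : kAW adj k ↔ Function.Surjective (lightsOut adj (ZMod k)) := by
    refine ⟨fun h y => ?_, fun h lam => ?_⟩
    · obtain ⟨x, hx⟩ := h (-y)
      refine ⟨x, funext fun v => ?_⟩
      change x v + _ = y v
      have hv := hx v
      rw [Pi.neg_apply] at hv
      linear_combination hv
    · obtain ⟨x, hx⟩ := h (-lam)
      refine ⟨x, fun v => ?_⟩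
      have := congrFun hx v
      simp only [lightsOut, AddMonoidHom.coe_mk, ZeroHom.coe_mk, Pi.neg_apply] at this
      rw [add_assoc, this, add_neg_cancel]
  rw [hsurj, ← Finite.injective_iff_surjective, injective_iff_map_eq_zero]

variable {R : Type*} [AddCommGroup R]

theorem mem_feedbackArcSet {adj : V → V → Prop} {n : ℕ} {σ : Fin n ≃ V} {u w : V} :
    (u, w) ∈ feedbackArcSet adj σ ↔ adj u w ∧ σ.symm w < σ.symm u := by
  simp [feedbackArcSet]

theorem lightsOut_apply_eq_of_tournament {adj : V → V → Prop} (hirr : ∀ v, ¬ adj v v)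
    (htour : ∀ u v : V, u ≠ v → (adj u v ↔ ¬ adj v u)) {n : ℕ} (σ : Fin n ≃ V)
    (x : V → R) (v : V) :
    lightsOut adj R x v =
      ∑ u ∈ univ.filter (fun u => σ.symm u ≤ σ.symm v), x u
        + ∑ u ∈ univ.filter (fun u => (u, v) ∈ feedbackArcSet adj σ), x u
        - ∑ w ∈ univ.filter (fun w => (v, w) ∈ feedbackArcSet adj σ), x w := by
  simp only [lightsOut, AddMonoidHom.coe_mk, ZeroHom.coe_mk, sum_filter]
  have hdiag : x v = ∑ u, if u = v then x u else 0 := by simp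
  rw [hdiag, ← sum_add_distrib, ← sum_add_distrib, ← sum_sub_distrib]
  refine sum_congr rfl fun u _ => ?_
  simp only [mem_feedbackArcSet]
  by_cases huv : u = v
  · subst huv
    simp [hirr]
  have hpos : σ.symm u ≠ σ.symm v := σ.symm.injective.ne huv
  rcases lt_or_gt_of_ne hpos with hlt | hgt
  · have := htour u v huv
    by_cases h : adj u v <;> simp_all [hlt.le, not_lt.2 hlt.le]
  · have := htour u v huv
    by_cases h : adj u v <;> simp_all [not_le.2 hgt, not_lt.2 hgt.le]

end LightsOut

section FeedbackArcSet

variable {V : Type*} [Fintype V] {adj : V → V → Prop} {n : ℕ}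

theorem Fin.swap_lt_swap_iff_of_succ {a b i j : Fin n} (hab : (b : ℕ) = a + 1)
    (hij : ¬ (i = a ∧ j = b)) (hji : ¬ (i = b ∧ j = a)) :
    Equiv.swap a b i < Equiv.swap a b j ↔ i < j := by
  simp only [Equiv.swap_apply_def, Fin.lt_def, ← Fin.val_inj] at *
  split_ifs <;> omega

theorem feedbackArcSet_swap_trans (htour : ∀ u v : V, u ≠ v → (adj u v ↔ ¬ adj v u))
    (σ : Fin n ≃ V) {a b : Fin n} (hab : (b : ℕ) = a + 1)
    (hba : (σ b, σ a) ∈ feedbackArcSet adj σ) :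
    feedbackArcSet adj ((Equiv.swap a b).trans σ) = (feedbackArcSet adj σ).erase (σ b, σ a) := by
  have hne : a ≠ b := fun h => by simp [h] at hab
  ext ⟨u, w⟩
  obtain ⟨i, rfl⟩ := σ.surjective u
  obtain ⟨j, rfl⟩ := σ.surjective w
  simp only [mem_erase, mem_feedbackArcSet, Equiv.symm_trans_apply, Equiv.symm_swap,
    Equiv.symm_apply_apply, ne_eq, Prod.mk.injEq, σ.injective.eq_iff] at hba ⊢
  by_cases hab' : i = a ∧ j = b
  · obtain ⟨rfl, rfl⟩ := hab'
    have : ¬ adj (σ i) (σ j) := fun h => (htour _ _ (σ.injective.ne hne)).1 h hba.1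
    simp [this]
  by_cases hba' : i = b ∧ j = a
  · obtain ⟨rfl, rfl⟩ := hba'
    simp [Fin.lt_def, hab]
  rw [Fin.swap_lt_swap_iff_of_succ hab (by tauto) (by tauto)]
  tauto

theorem add_two_le_of_mem_feedbackArcSet (htour : ∀ u v : V, u ≠ v → (adj u v ↔ ¬ adj v u))
    {σ : Fin n ≃ V}
    (hmin : ∀ τ : Fin n ≃ V, (feedbackArcSet adj σ).card ≤ (feedbackArcSet adj τ).card)
    {u w : V} (huw : (u, w) ∈ feedbackArcSet adj σ) :
    (σ.symm w : ℕ) + 2 ≤ σ.symm u := by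
  have hlt : (σ.symm w : ℕ) < σ.symm u := (mem_feedbackArcSet.1 huw).2
  by_contra! hsucc
  have hab : ((σ.symm u : Fin n) : ℕ) = σ.symm w + 1 := by omega
  have hmem : (σ (σ.symm u), σ (σ.symm w)) ∈ feedbackArcSet adj σ := by simpa using huw
  have := hmin ((Equiv.swap (σ.symm w) (σ.symm u)).trans σ)
  rw [feedbackArcSet_swap_trans htour σ hab hmem, card_erase_of_mem hmem] at this
  have := card_pos.2 ⟨_, hmem⟩
  omega

end FeedbackArcSet

section Positions

variable {R : Type*} [AddCommGroup R]

/-- Row `i` of the lights-out system of a tournament whose vertices sit at positions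
`0, …, n - 1`, where `B j i` says that the arc between positions `i` and `j` is a feedback arc
`j → i`: all other arcs point forward. -/
noncomputable def prefixRow (n : ℕ) (B : ℕ → ℕ → Prop) (x : ℕ → R) (i : ℕ) : R :=
  ∑ j ∈ range (i + 1), x j + ∑ j ∈ (range n).filter (B · i), x j
    - ∑ j ∈ (range n).filter (B i ·), x j

variable {V : Type*} [Fintype V] {n : ℕ}

theorem sum_filter_comp_symm (σ : Fin n ≃ V) (P : ℕ → Prop) [DecidablePred P] (x : ℕ → R) :
    ∑ u ∈ univ.filter (fun u => P (σ.symm u)), x (σ.symm u) = ∑ j ∈ (range n).filter P, x j := by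
  rw [sum_filter, sum_filter, ← Fin.sum_univ_eq_sum_range (fun j => if P j then x j else 0)]
  exact σ.symm.sum_comp (fun j : Fin n => if P j then x j else 0)

theorem lightsOut_comp_symm_apply {adj : V → V → Prop} (hirr : ∀ v, ¬ adj v v)
    (htour : ∀ u v : V, u ≠ v → (adj u v ↔ ¬ adj v u)) (σ : Fin n ≃ V) {B : ℕ → ℕ → Prop}
    (hB : ∀ u w, (u, w) ∈ feedbackArcSet adj σ ↔ B (σ.symm u) (σ.symm w))
    (x : ℕ → R) (i : Fin n) :
    lightsOut adj R (fun v => x (σ.symm v)) (σ i) = prefixRow n B x i := by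
  rw [lightsOut_apply_eq_of_tournament hirr htour σ]
  simp only [hB, Equiv.symm_apply_apply, Fin.le_def]
  rw [sum_filter_comp_symm σ (· ≤ (i : ℕ)), sum_filter_comp_symm σ (B · i),
    sum_filter_comp_symm σ (B i ·), prefixRow]
  congr 3
  ext j
  simp only [mem_filter, mem_range]
  omega

end Positions

section Reduction

variable {V : Type*} [Fintype V] {adj : V → V → Prop} {n : ℕ}

theorem lightsOut_ker_trivial_iff_prefixRow {R : Type*} [AddCommGroup R] (hirr : ∀ v, ¬ adj v v)
    (htour : ∀ u v : V, u ≠ v → (adj u v ↔ ¬ adj v u)) (σ : Fin n ≃ V) {B : ℕ → ℕ → Prop}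
    (hB : ∀ u w, (u, w) ∈ feedbackArcSet adj σ ↔ B (σ.symm u) (σ.symm w)) :
    (∀ x : V → R, lightsOut adj R x = 0 → x = 0) ↔
      ∀ x : ℕ → R, (∀ i < n, prefixRow n B x i = 0) → ∀ j < n, x j = 0 := by
  constructor
  · intro h x hx j hj
    have h0 := h (fun v => x (σ.symm v)) <| funext fun v => by
      obtain ⟨i, rfl⟩ := σ.surjective v
      rw [lightsOut_comp_symm_apply hirr htour σ hB]
      exact hx i i.2
    simpa using congrFun h0 (σ ⟨j, hj⟩)
  · intro h x hx
    set y : ℕ → R := fun j => if hj : j < n then x (σ ⟨j, hj⟩) else 0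
    have hxy : x = fun v => y (σ.symm v) := funext fun v => by simp [y]
    have hy := h y fun i hi => by
      rw [← lightsOut_comp_symm_apply hirr htour σ hB y ⟨i, hi⟩, ← hxy, hx, Pi.zero_apply]
    rw [hxy]
    exact funext fun v => hy _ (σ.symm v).2

end Reduction

section PathPositions

def IsPathArc (p : ℕ) (g : ℕ → ℕ) (j i : ℕ) : Prop :=
  ∃ t, t + 1 < p ∧ g t = j ∧ g (t + 1) = i

variable {p : ℕ} {g : ℕ → ℕ}

theorem add_two_le_of_lt (hgap : ∀ t, t + 1 < p → g (t + 1) + 2 ≤ g t) {s t : ℕ} (hst : s < t)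
    (ht : t < p) : g t + 2 ≤ g s := by
  induction t, hst using Nat.le_induction with
  | base => exact hgap s ht
  | succ t hst ih =>
    have := hgap t ht
    have := ih (by omega)
    omega

theorem eq_of_apply_eq (hgap : ∀ t, t + 1 < p → g (t + 1) + 2 ≤ g t) {s t : ℕ} (hs : s < p)
    (ht : t < p) (h : g s = g t) : s = t := by
  rcases lt_trichotomy s t with hst | rfl | hst
  · have := add_two_le_of_lt hgap hst ht; omega
  · rfl
  · have := add_two_le_of_lt hgap hst hs; omega

theorem apply_add_one_ne (hgap : ∀ t, t + 1 < p → g (t + 1) + 2 ≤ g t) {s t : ℕ} (hs : s < p)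
    (ht : t < p) : g s + 1 ≠ g t := by
  rcases lt_trichotomy s t with hst | rfl | hst
  · have := add_two_le_of_lt hgap hst ht; omega
  · omega
  · have := add_two_le_of_lt hgap hst hs; omega

theorem isPathArc_apply_right_iff (hgap : ∀ t, t + 1 < p → g (t + 1) + 2 ≤ g t) {t j : ℕ}
    (ht : t < p) : IsPathArc p g j (g t) ↔ 1 ≤ t ∧ j = g (t - 1) := by
  constructor
  · rintro ⟨s, hs, rfl, hgs⟩
    obtain rfl := eq_of_apply_eq hgap hs ht hgs
    simp
  · rintro ⟨ht1, rfl⟩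
    exact ⟨t - 1, by omega, rfl, by rw [Nat.sub_add_cancel ht1]⟩

theorem isPathArc_apply_left_iff (hgap : ∀ t, t + 1 < p → g (t + 1) + 2 ≤ g t) {t j : ℕ}
    (ht : t < p) : IsPathArc p g (g t) j ↔ t + 1 < p ∧ j = g (t + 1) := by
  constructor
  · rintro ⟨s, hs, hgs, rfl⟩
    obtain rfl := eq_of_apply_eq hgap (by omega) ht hgs
    exact ⟨hs, rfl⟩
  · rintro ⟨ht1, rfl⟩
    exact ⟨t, ht1, rfl, rfl⟩

variable {R : Type*} [AddCommGroup R] {n : ℕ}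

theorem prefixRow_isPathArc_apply (hgap : ∀ t, t + 1 < p → g (t + 1) + 2 ≤ g t)
    (hlt : ∀ t < p, g t < n) (x : ℕ → R) {t : ℕ} (ht : t < p) :
    prefixRow n (IsPathArc p g) x (g t) = ∑ j ∈ range (g t + 1), x j
      + (if 1 ≤ t then x (g (t - 1)) else 0) - (if t + 1 < p then x (g (t + 1)) else 0) := by
  simp only [prefixRow, isPathArc_apply_right_iff hgap ht, isPathArc_apply_left_iff hgap ht]
  congr 2
  · split_ifs with h
    · simp [h, filter_eq', hlt (t - 1) (by omega)]
    · simp [h]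
  · split_ifs with h
    · simp [h, filter_eq', hlt (t + 1) h]
    · simp [h]

theorem prefixRow_isPathArc_of_forall_ne (x : ℕ → R) {i : ℕ} (hi : ∀ t < p, g t ≠ i) :
    prefixRow n (IsPathArc p g) x i = ∑ j ∈ range (i + 1), x j := by
  rw [prefixRow, filter_false_of_mem, filter_false_of_mem]
  · simp only [sum_empty, add_zero, sub_zero]
  · rintro j - ⟨t, ht, rfl, -⟩
    exact hi t (by omega) rfl
  · rintro j - ⟨t, ht, -, rfl⟩
    exact hi (t + 1) ht rfl

theorem prefixRow_isPathArc_of_forall_eq_zero {x : ℕ → R} (hx : ∀ t < p, x (g t) = 0) (i : ℕ) :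
    prefixRow n (IsPathArc p g) x i = ∑ j ∈ range (i + 1), x j := by
  have hin : ∑ j ∈ (range n).filter (IsPathArc p g · i), x j = 0 := sum_eq_zero fun j hj => by
    obtain ⟨t, ht, rfl, -⟩ := (mem_filter.1 hj).2
    exact hx t (by omega)
  have hout : ∑ j ∈ (range n).filter (IsPathArc p g i ·), x j = 0 := sum_eq_zero fun j hj => by
    obtain ⟨t, ht, -, rfl⟩ := (mem_filter.1 hj).2
    exact hx (t + 1) ht
  rw [prefixRow, hin, hout, add_zero, sub_zero]

end PathPositions

section PathRecurrence

variable {R : Type*} [CommRing R] {p : ℕ}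

/-- The rows of the lights-out system at the positions of the path, for the values `y t` of a
solution there (its prefix sums vanish just before each path position). -/
def PathRecurrence (p : ℕ) (y : ℕ → R) : Prop :=
  ∀ t < p, y t + (if 1 ≤ t then y (t - 1) else 0) - (if t + 1 < p then y (t + 1) else 0) = 0

theorem ite_fib_pred_mul (t : ℕ) (c : R) :
    (if 1 ≤ t then (Nat.fib (t - 1 + 1) : R) * c else 0) = Nat.fib t * c := by
  rcases t with _ | t <;> simp

theorem PathRecurrence.eq_fib_mul {y : ℕ → R} (h : PathRecurrence p y) :
    ∀ t < p, y t = Nat.fib (t + 1) * y 0 := by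
  intro t
  induction t using Nat.twoStepInduction with
  | zero => simp
  | one =>
    intro hp
    have := h 0 (by omega)
    simp only [if_neg (by omega : ¬ 1 ≤ 0), if_pos hp] at this
    rw [show Nat.fib (1 + 1) = 1 from rfl, Nat.cast_one, one_mul]
    linear_combination -this
  | more t ih₀ ih₁ =>
    intro hp
    have := h (t + 1) (by omega)
    simp only [if_pos (by omega : 1 ≤ t + 1), if_pos hp, Nat.add_sub_cancel] at this
    rw [Nat.fib_add_two (n := t + 1), Nat.cast_add]
    linear_combination -this + ih₀ (by omega) + ih₁ (by omega)

theorem PathRecurrence.fib_mul_eq_zero {y : ℕ → R} (h : PathRecurrence p y) {t : ℕ} (ht : t < p) :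
    (Nat.fib (p + 1) : R) * y t = 0 := by
  obtain ⟨q, rfl⟩ : ∃ q, p = q + 1 := ⟨p - 1, by omega⟩
  have hlast := h q (by omega)
  have hprev : (if 1 ≤ q then y (q - 1) else 0) = Nat.fib q * y 0 := by
    rw [← ite_fib_pred_mul]
    split_ifs
    · exact h.eq_fib_mul _ (by omega)
    · rfl
  rw [hprev, if_neg (by omega), h.eq_fib_mul q (by omega)] at hlast
  rw [h.eq_fib_mul t ht, Nat.fib_add_two, Nat.cast_add]
  linear_combination (Nat.fib (t + 1) : R) * hlast

theorem pathRecurrence_fib_mul {c : R} (hc : (Nat.fib (p + 1) : R) * c = 0) :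
    PathRecurrence p (fun t => Nat.fib (t + 1) * c) := by
  intro t ht
  simp only [ite_fib_pred_mul]
  split_ifs with hnext
  · rw [Nat.fib_add_two, Nat.cast_add]
    ring
  · obtain rfl : p = t + 1 := by omega
    rw [Nat.fib_add_two, Nat.cast_add] at hc
    linear_combination hc

end PathRecurrence

section PathKernel

variable {R : Type*} [CommRing R] {n p : ℕ} {g : ℕ → ℕ}

theorem eq_zero_of_prefixRow_isPathArc_eq_zero (hgap : ∀ t, t + 1 < p → g (t + 1) + 2 ≤ g t)
    (hlt : ∀ t < p, g t < n) (hF : (Nat.fib (p + 1) : R) ∈ nonZeroDivisors R) {x : ℕ → R}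
    (hx : ∀ i < n, prefixRow n (IsPathArc p g) x i = 0) : ∀ j < n, x j = 0 := by
  have hbefore : ∀ t < p, ∑ j ∈ range (g t), x j = 0 := by
    intro t ht
    rcases Nat.eq_zero_or_pos (g t) with h0 | hpos
    · simp [h0]
    obtain ⟨i, hi⟩ : ∃ i, g t = i + 1 := ⟨g t - 1, by omega⟩
    rw [hi, ← prefixRow_isPathArc_of_forall_ne (n := n) (g := g) (i := i) x fun s hs hs' =>
      apply_add_one_ne hgap hs ht (by omega)]
    exact hx i (by have := hlt t ht; omega)
  have hrec : PathRecurrence p (fun t => x (g t)) := by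
    intro t ht
    have := hx (g t) (hlt t ht)
    rwa [prefixRow_isPathArc_apply hgap hlt x ht, sum_range_succ, hbefore t ht, zero_add] at this
  have hpath : ∀ t < p, x (g t) = 0 := fun t ht =>
    (mem_nonZeroDivisors_iff_left.1 hF) _ (hrec.fib_mul_eq_zero ht)
  have hsum : ∀ i < n, ∑ j ∈ range (i + 1), x j = 0 := fun i hi => by
    rw [← prefixRow_isPathArc_of_forall_eq_zero hpath]
    exact hx i hi
  intro j hj
  have := hsum j hj
  rcases j with _ | j
  · simpa using this
  · rwa [sum_range_succ, hsum j (by omega), zero_add] at this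

theorem exists_prefixRow_isPathArc_eq_zero (hgap : ∀ t, t + 1 < p → g (t + 1) + 2 ≤ g t)
    (hlt : ∀ t < p, g t < n) (hp : 0 < p) {c : R} (hc : (Nat.fib (p + 1) : R) * c = 0) :
    ∃ x : ℕ → R, (∀ i, prefixRow n (IsPathArc p g) x i = 0) ∧ x (g 0) = c := by
  set z : ℕ → R := fun t => Nat.fib (t + 1) * c
  have hz_on : ∀ s < p, ∑ t ∈ (range p).filter (g · = g s), z t = z s := fun s hs =>
    sum_eq_single_of_mem s (by simp [hs]) fun t ht hts =>
      absurd (eq_of_apply_eq hgap (by simpa using (mem_filter.1 ht).1) hs (mem_filter.1 ht).2) hts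
  have hz_off : ∀ i, (∀ t < p, g t ≠ i) → ∑ t ∈ (range p).filter (g · = i), z t = 0 :=
    fun i hi => sum_eq_zero fun t ht => absurd (mem_filter.1 ht).2 (hi t (by simpa using
      (mem_filter.1 ht).1))
  -- `Q j` is the sum of `x` over the positions before `j`, so the prefix sums of `x` are `z t`
  -- at `g t` and zero elsewhere.
  set Q : ℕ → R := fun j => ∑ t ∈ (range p).filter (g · + 1 = j), z t
  set x : ℕ → R := fun i => Q (i + 1) - Q i
  have hQ0 : Q 0 = 0 := sum_eq_zero fun t ht => absurd (mem_filter.1 ht).2 (by omega)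
  have hprefix : ∀ i, ∑ j ∈ range (i + 1), x j = ∑ t ∈ (range p).filter (g · = i), z t := by
    intro i
    rw [sum_range_sub, hQ0, sub_zero]
    simp only [Q, add_left_inj]
  have hx : ∀ s < p, x (g s) = z s := by
    intro s hs
    simp only [x, Q, add_left_inj, hz_on s hs]
    rw [sum_eq_zero fun t ht => absurd (mem_filter.1 ht).2
      (apply_add_one_ne hgap (by simpa using (mem_filter.1 ht).1) hs), sub_zero]
  refine ⟨x, fun i => ?_, by simpa [z] using hx 0 hp⟩
  by_cases hi : ∃ s < p, g s = i
  · obtain ⟨s, hs, rfl⟩ := hi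
    rw [prefixRow_isPathArc_apply hgap hlt x hs, hprefix, hz_on s hs]
    rw [ite_congr rfl (fun _ => hx (s - 1) (by omega)) (fun _ => rfl),
      ite_congr rfl (fun h => hx (s + 1) h) (fun _ => rfl)]
    exact pathRecurrence_fib_mul hc s hs
  · simp only [not_exists, not_and] at hi
    rw [prefixRow_isPathArc_of_forall_ne x hi, hprefix, hz_off i hi]

theorem prefixRow_isPathArc_ker_trivial_iff (hgap : ∀ t, t + 1 < p → g (t + 1) + 2 ≤ g t)
    (hlt : ∀ t < p, g t < n) :
    (∀ x : ℕ → R, (∀ i < n, prefixRow n (IsPathArc p g) x i = 0) → ∀ j < n, x j = 0) ↔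
      (Nat.fib (p + 1) : R) ∈ nonZeroDivisors R := by
  refine ⟨fun h => mem_nonZeroDivisors_iff_left.2 fun c hc => ?_,
    fun hF x hx => eq_zero_of_prefixRow_isPathArc_eq_zero hgap hlt hF hx⟩
  rcases Nat.eq_zero_or_pos p with rfl | hp
  · simpa using hc
  obtain ⟨x, hx, rfl⟩ := exists_prefixRow_isPathArc_eq_zero hgap hlt hp hc
  exact h x (fun i _ => hx i) _ (hlt 0 hp)

end PathKernel

section PathData

variable {V : Type*} {n : ℕ}

theorem mem_iff_isPathArc_of_path {S : Finset (V × V)} (σ : Fin n ≃ V) {p : ℕ} {f : Fin p → V}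
    (hS : ∀ u w, (u, w) ∈ S ↔
      ∃ (i : Fin p) (h : (i : ℕ) + 1 < p), f i = u ∧ f ⟨(i : ℕ) + 1, h⟩ = w) (u w : V) :
    (u, w) ∈ S ↔
      IsPathArc p (fun t => if h : t < p then σ.symm (f ⟨t, h⟩) else 0) (σ.symm u) (σ.symm w) := by
  have hpos : ∀ (t : ℕ) (ht : t < p) (v : V),
      (if h : t < p then (σ.symm (f ⟨t, h⟩) : ℕ) else 0) = σ.symm v ↔ f ⟨t, ht⟩ = v := by
    intro t ht v
    rw [dif_pos ht, Fin.val_inj, σ.symm.injective.eq_iff]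
  rw [hS]
  constructor
  · rintro ⟨i, hi, rfl, rfl⟩
    exact ⟨i, hi, (hpos i i.2 _).2 rfl, (hpos _ hi _).2 rfl⟩
  · rintro ⟨t, ht, hu, hw⟩
    exact ⟨⟨t, by omega⟩, ht, (hpos t _ u).1 hu, (hpos _ ht w).1 hw⟩

theorem card_eq_of_mem_iff_isPathArc {S : Finset (V × V)} (σ : Fin n ≃ V) {p : ℕ} {g : ℕ → ℕ}
    (hgap : ∀ t, t + 1 < p → g (t + 1) + 2 ≤ g t) (hlt : ∀ t < p, g t < n)
    (hS : ∀ u w, (u, w) ∈ S ↔ IsPathArc p g (σ.symm u) (σ.symm w)) : S.card = p - 1 := by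
  rw [← card_range (p - 1)]
  symm
  refine card_bij (fun t ht => (σ ⟨g t, hlt t (by simp at ht; omega)⟩,
    σ ⟨g (t + 1), hlt (t + 1) (by simp at ht; omega)⟩)) (fun t ht => ?_) (fun s hs t ht h => ?_) ?_
  · rw [hS, Equiv.symm_apply_apply, Equiv.symm_apply_apply]
    exact ⟨t, by simp at ht; omega, rfl, rfl⟩
  · simp only [Prod.mk.injEq, σ.injective.eq_iff, Fin.mk.injEq] at h
    exact eq_of_apply_eq hgap (by simp at hs; omega) (by simp at ht; omega) h.1
  · rintro ⟨u, w⟩ huw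
    obtain ⟨t, ht, hu, hw⟩ := (hS u w).1 huw
    refine ⟨t, by simp; omega, ?_⟩
    simp only [hu, hw, Fin.eta, Equiv.apply_symm_apply]

end PathData

theorem ZMod.natCast_mem_nonZeroDivisors_iff_coprime {k : ℕ} [NeZero k] (a : ℕ) :
    (a : ZMod k) ∈ nonZeroDivisors (ZMod k) ↔ Nat.Coprime a k := by
  rw [← isUnit_iff_mem_nonZeroDivisors_of_finite, ZMod.isUnit_iff_coprime]

theorem kAW_iff_of_path_feedback_general {V : Type*} [Fintype V]
    (adj : V → V → Prop) (hirr : ∀ v : V, ¬ adj v v)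
    (htour : ∀ u v : V, u ≠ v → (adj u v ↔ ¬ adj v u))
    (k : ℕ) (hk : 2 ≤ k)
    {n : ℕ} (σ : Fin n ≃ V)
    (hmin : ∀ τ : Fin n ≃ V, (feedbackArcSet adj σ).card ≤ (feedbackArcSet adj τ).card)
    -- the subdigraph arc-induced by the feedback arc set is a directed path
    (hpath : ∃ (p : ℕ) (f : Fin p → V), Function.Injective f ∧
      (∀ v : V, (∃ e ∈ feedbackArcSet adj σ, e.1 = v ∨ e.2 = v) ↔ ∃ i : Fin p, f i = v) ∧
      (∀ u w : V, (u, w) ∈ feedbackArcSet adj σ ↔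
        ∃ (i : Fin p) (h : (i : ℕ) + 1 < p), f i = u ∧ f ⟨(i : ℕ) + 1, h⟩ = w))
    (m : ℕ) (hm : (feedbackArcSet adj σ).card = m) :
    kAW adj k ↔ Nat.gcd k (Nat.fib (m + 2)) = 1 := by
  have : NeZero k := ⟨by omega⟩
  obtain ⟨p, f, -, -, hf⟩ := hpath
  set g : ℕ → ℕ := fun t => if h : t < p then σ.symm (f ⟨t, h⟩) else 0
  have hS := mem_iff_isPathArc_of_path σ hf
  have hlt : ∀ t < p, g t < n := fun t ht => by simp [g, ht]
  have hgap : ∀ t, t + 1 < p → g (t + 1) + 2 ≤ g t := fun t ht => by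
    simpa [g, ht, show t < p by omega] using
      add_two_le_of_mem_feedbackArcSet htour hmin ((hf _ _).2 ⟨⟨t, by omega⟩, ht, rfl, rfl⟩)
  have hfib : Nat.fib (m + 2) = Nat.fib (p + 1) := by
    rw [← hm, card_eq_of_mem_iff_isPathArc σ hgap hlt hS]
    rcases p with _ | p
    · rfl
    · simp
  rw [kAW_iff_lightsOut_eq_zero, lightsOut_ker_trivial_iff_prefixRow hirr htour σ hS,
    prefixRow_isPathArc_ker_trivial_iff hgap hlt, hfib,
    ZMod.natCast_mem_nonZeroDivisors_iff_coprime, Nat.coprime_comm]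

/-- A strongly connected tournament with a minimum feedback arc set `S` of size `m` that
arc-induces a directed path is `k`-AW iff `gcd(k, F_{m+2}) = 1`. -/
theorem kAW_iff_of_path_feedback {V : Type*} [Fintype V]
    (adj : V → V → Prop) (hirr : ∀ v : V, ¬ adj v v)
    (htour : ∀ u v : V, u ≠ v → (adj u v ↔ ¬ adj v u))
    (hstrong : ∀ v w : V, Relation.ReflTransGen adj v w)
    (k : ℕ) (hk : 2 ≤ k)
    {n : ℕ} (hn : Fintype.card V = n) (σ : Fin n ≃ V)
    (hmin : ∀ τ : Fin n ≃ V, (feedbackArcSet adj σ).card ≤ (feedbackArcSet adj τ).card)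
    -- the subdigraph arc-induced by the feedback arc set is a directed path
    (hpath : ∃ (p : ℕ) (f : Fin p → V), Function.Injective f ∧
      (∀ v : V, (∃ e ∈ feedbackArcSet adj σ, e.1 = v ∨ e.2 = v) ↔ ∃ i : Fin p, f i = v) ∧
      (∀ u w : V, (u, w) ∈ feedbackArcSet adj σ ↔
        ∃ (i : Fin p) (h : (i : ℕ) + 1 < p), f i = u ∧ f ⟨(i : ℕ) + 1, h⟩ = w))
    (m : ℕ) (hm : (feedbackArcSet adj σ).card = m) :
    kAW adj k ↔ Nat.gcd k (Nat.fib (m + 2)) = 1 :=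
  kAW_iff_of_path_feedback_general adj hirr htour k hk σ hmin hpath m hm
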